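/- arXiv:math/0310278 — 4 statements merged into one kernel-verified Lean document; each statement's English description precedes it below -/
import Mathlib

section
/- Let X_N = {x_0 < x_1 < ... < x_{N-1}} be N distinct real nodes with positive weights w_0,...,w_{N-1}, and let p be a polynomial of degree exactly k with 1 ≤ k ≤ N-1 orthogonal to all polynomials of degree < k with respect to ⟨f,g⟩ = ∑_n f(x_n)g(x_n)w_n. Then no closed interval [x_n, x_{n+1}] between two consecutive nodes contains more than one zero of p. -/
open Polynomial Finset

/-- Exclusion principle: no closed interval between two consecutive nodes
contains more than one zero of a discrete orthogonal polynomial. -/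
theorem discrete_orthogonal_polynomial_exclusion
    (N k : ℕ) (x w : Fin N → ℝ) (hx : StrictMono x) (hw : ∀ n, 0 < w n)
    (hk1 : 1 ≤ k) (hk2 : k ≤ N - 1)
    (p : Polynomial ℝ) (hdeg : p.natDegree = k)
    (horth : ∀ m : ℕ, m < k → ∑ n : Fin N, p.eval (x n) * (x n) ^ m * w n = 0) :
    ∀ (n : ℕ) (hn : n + 1 < N), ∀ z₁ z₂ : ℝ, p.IsRoot z₁ → p.IsRoot z₂ →
      z₁ ∈ Set.Icc (x ⟨n, by omega⟩) (x ⟨n + 1, hn⟩) →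
      z₂ ∈ Set.Icc (x ⟨n, by omega⟩) (x ⟨n + 1, hn⟩) → z₁ = z₂ := by
  intro n hn z₁ z₂ hz₁ hz₂ hm₁ hm₂
  by_contra hne
  set a := x ⟨n, by omega⟩ with ha
  set b := x ⟨n + 1, hn⟩ with hb
  have hp0 : p ≠ 0 := by
    intro h; rw [h] at hdeg; simp at hdeg; omega
  -- factor out the two roots
  obtain ⟨q, hq⟩ := (dvd_iff_isRoot (p := p) (a := z₁)).2 hz₁
  have hqroot : q.IsRoot z₂ := by
    have h2 := hz₂
    rw [hq] at h2
    simp only [IsRoot, eval_mul, eval_sub, eval_X, eval_C, mul_eq_zero,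
      sub_eq_zero] at h2 ⊢
    rcases h2 with h | h
    · exact absurd h.symm hne
    · exact h
  obtain ⟨s, hsq⟩ := (dvd_iff_isRoot (p := q) (a := z₂)).2 hqroot
  have hps : p = (X - C z₁) * (X - C z₂) * s := by rw [hq, hsq]; ring
  have hs0 : s ≠ 0 := by
    intro h; rw [h, mul_zero] at hps; exact hp0 hps
  have hXz1 : (X - C z₁ : Polynomial ℝ) ≠ 0 := X_sub_C_ne_zero z₁
  have hXz2 : (X - C z₂ : Polynomial ℝ) ≠ 0 := X_sub_C_ne_zero z₂
  have hdegs : k = 2 + s.natDegree := by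
    have := hps
    have hd : p.natDegree = ((X - C z₁) * (X - C z₂)).natDegree + s.natDegree := by
      rw [hps, natDegree_mul (mul_ne_zero hXz1 hXz2) hs0]
    rw [natDegree_mul hXz1 hXz2, natDegree_X_sub_C, natDegree_X_sub_C] at hd
    omega
  -- the sum ⟨p, s⟩ is zero
  have hsum : ∑ m : Fin N, p.eval (x m) * s.eval (x m) * w m = 0 := by
    have heval : ∀ t : ℝ, s.eval t =
        ∑ i ∈ Finset.range (s.natDegree + 1), s.coeff i * t ^ i := by
      intro t; rw [eval_eq_sum_range]
    calc ∑ m : Fin N, p.eval (x m) * s.eval (x m) * w m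
        = ∑ m : Fin N, ∑ i ∈ Finset.range (s.natDegree + 1),
            s.coeff i * (p.eval (x m) * (x m) ^ i * w m) := by
          refine Finset.sum_congr rfl fun m _ => ?_
          rw [heval (x m), Finset.mul_sum, Finset.sum_mul]
          refine Finset.sum_congr rfl fun i _ => by ring
      _ = ∑ i ∈ Finset.range (s.natDegree + 1),
            s.coeff i * ∑ m : Fin N, p.eval (x m) * (x m) ^ i * w m := by
          rw [Finset.sum_comm]
          exact Finset.sum_congr rfl fun i _ => (Finset.mul_sum _ _ _).symm
      _ = 0 := by
          refine Finset.sum_eq_zero fun i hi => ?_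
          rw [horth i (by simp at hi; omega), mul_zero]
  -- each term is nonnegative
  have hterm : ∀ m : Fin N, p.eval (x m) * s.eval (x m) * w m =
      ((x m - z₁) * (x m - z₂)) * (s.eval (x m))^2 * w m := by
    intro m
    rw [hps]; simp only [eval_mul, eval_sub, eval_X, eval_C]; ring
  have hsign : ∀ m : Fin N, 0 ≤ (x m - z₁) * (x m - z₂) := by
    intro m
    rcases le_or_gt (m : ℕ) n with h | h
    · have hxm : x m ≤ a := hx.monotone (by simp [Fin.le_def, h])
      have h1 : x m - z₁ ≤ 0 := by linarith [hm₁.1]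
      have h2 : x m - z₂ ≤ 0 := by linarith [hm₂.1]
      nlinarith
    · have hxm : b ≤ x m := hx.monotone (by simp [Fin.le_def]; omega)
      have h1 : 0 ≤ x m - z₁ := by linarith [hm₁.2]
      have h2 : 0 ≤ x m - z₂ := by linarith [hm₂.2]
      exact mul_nonneg h1 h2
  have hnonneg : ∀ m : Fin N, 0 ≤ p.eval (x m) * s.eval (x m) * w m := by
    intro m
    rw [hterm m]
    exact mul_nonneg (mul_nonneg (hsign m) (sq_nonneg _)) (hw m).le
  have hzero : ∀ m : Fin N, p.eval (x m) * s.eval (x m) * w m = 0 := by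
    intro m
    have := (Finset.sum_eq_zero_iff_of_nonneg (fun m _ => hnonneg m)).1 hsum
    exact this m (Finset.mem_univ m)
  -- s vanishes at all nodes except possibly n and n+1
  have hsroot : ∀ m : Fin N, (m : ℕ) ≠ n → (m : ℕ) ≠ n + 1 → s.eval (x m) = 0 := by
    intro m hmn hmn1
    have h0 := hzero m
    rw [hterm m] at h0
    have hpos : 0 < (x m - z₁) * (x m - z₂) := by
      rcases le_or_gt (m : ℕ) n with h | h
      · have hlt : (m : ℕ) < n := lt_of_le_of_ne h hmn
        have hxm : x m < a := hx (by simp [Fin.lt_def, hlt])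
        have h1 : x m - z₁ < 0 := by linarith [hm₁.1]
        have h2 : x m - z₂ < 0 := by linarith [hm₂.1]
        exact mul_pos_of_neg_of_neg h1 h2
      · have hlt : n + 1 < (m : ℕ) := by omega
        have hxm : b < x m := hx (by simp [Fin.lt_def]; omega)
        have h1 : 0 < x m - z₁ := by linarith [hm₁.2]
        have h2 : 0 < x m - z₂ := by linarith [hm₂.2]
        exact mul_pos h1 h2
    have hw' : w m ≠ 0 := (hw m).ne'
    have : (s.eval (x m))^2 = 0 := by
      by_contra hc
      have : 0 < (x m - z₁) * (x m - z₂) * (s.eval (x m))^2 * w m :=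
        mul_pos (mul_pos hpos (lt_of_le_of_ne (sq_nonneg _) (Ne.symm hc))) (hw m)
      linarith
    exact pow_eq_zero_iff (n := 2) (by norm_num) |>.1 this
  -- count roots of s
  set T : Finset (Fin N) :=
    Finset.univ.filter (fun m : Fin N => (m : ℕ) ≠ n ∧ (m : ℕ) ≠ n + 1) with hT
  have hTcard : T.card = N - 2 := by
    have : T = Finset.univ \ {⟨n, by omega⟩, ⟨n + 1, hn⟩} := by
      ext m
      simp [hT, Fin.ext_iff]
    rw [this, Finset.card_sdiff_of_subset (by simp)]
    rw [Finset.card_univ, Fintype.card_fin]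
    rw [Finset.card_insert_of_notMem (by simp [Fin.ext_iff]),
      Finset.card_singleton]
  have hinj : Set.InjOn x T := fun a _ b _ h => hx.injective h
  have hsub : T.image x ⊆ s.roots.toFinset := by
    intro t ht
    simp only [Finset.mem_image] at ht
    obtain ⟨m, hm, rfl⟩ := ht
    simp only [hT, Finset.mem_filter] at hm
    rw [Multiset.mem_toFinset, mem_roots hs0]
    exact hsroot m hm.2.1 hm.2.2
  have hcard : N - 2 ≤ s.natDegree := by
    calc N - 2 = T.card := hTcard.symm
      _ = (T.image x).card := (Finset.card_image_of_injOn hinj).symm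
      _ ≤ s.roots.toFinset.card := Finset.card_le_card hsub
      _ ≤ Multiset.card s.roots := Multiset.toFinset_card_le _
      _ ≤ s.natDegree := s.card_roots'
  omega
end

section
/- Let x_0,...,x_{N-1} be distinct real nodes with positive weights w_n, let π_k denote the monic discrete orthogonal polynomial of degree k (0 ≤ k ≤ N-1) and γ_k > 0 the leading coefficient of the orthonormal polynomial p_k = γ_k π_k. Let {w̄_n} be the dual weights and π̄_{N-k} the monic dual orthogonal polynomial of degree N-k. Then for every node x_l, π̄_{N-k}(x_l) = γ_{k-1}^2 · w_l · ∏_{n≠l}(x_l - x_n) · π_{k-1}(x_l). -/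
/-!
Write `D n = ∏_{m ≠ n} (x n - x m)`. For `deg f < N`, `∑ n, f (x n) / D n` is the coefficient
of `X ^ (N - 1)` in `f`. Dual orthogonality says that the values `πbar (x n) / (w n * D n)` have
this divided difference zero against every `X ^ m` with `m < N - k`, which forces them to be the
values of a polynomial `Q` of degree `< k`. The same coefficient formula computes the `w`-moments
of `Q` from `πbar * X ^ m`: they vanish below `k - 1` and equal `1` at `k - 1`, as do those of
`γ² π`. Positivity of `w` makes two polynomials of degree `< k` with equal first `k` moments
agree at the nodes.
-/

open Polynomial Finset

section Moments

variable {R ι : Type*} (s : Finset ι) (x w : ι → R)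

theorem sum_eval_mul_eval_mul_eq_zero_of_degree_lt [CommRing R] {f g : R[X]} {d : ℕ}
    (hg : g.degree < d) (hf : ∀ m < d, ∑ n ∈ s, f.eval (x n) * x n ^ m * w n = 0) :
    ∑ n ∈ s, f.eval (x n) * g.eval (x n) * w n = 0 := by
  rcases eq_or_ne g 0 with rfl | hg0
  · simp
  have hgd : g.natDegree < d := (natDegree_lt_iff_degree_lt hg0).mpr hg
  calc ∑ n ∈ s, f.eval (x n) * g.eval (x n) * w n
      = ∑ m ∈ range d, g.coeff m * ∑ n ∈ s, f.eval (x n) * x n ^ m * w n := by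
        simp_rw [eval_eq_sum_range' hgd, mul_sum, sum_mul]
        rw [sum_comm]
        exact sum_congr rfl fun _ _ => sum_congr rfl fun _ _ => by ring
    _ = 0 := sum_eq_zero fun m hm => by rw [hf m (mem_range.mp hm), mul_zero]

theorem Polynomial.Monic.sum_eval_mul_pow_natDegree_mul_eq [CommRing R] {p : R[X]}
    (hp : p.Monic) (horth : ∀ m < p.natDegree, ∑ n ∈ s, p.eval (x n) * x n ^ m * w n = 0) :
    ∑ n ∈ s, p.eval (x n) * x n ^ p.natDegree * w n
      = ∑ n ∈ s, p.eval (x n) * p.eval (x n) * w n := by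
  nontriviality R
  have hlow : (p - X ^ p.natDegree).degree < (p.natDegree : WithBot ℕ) := by
    have := degree_sub_lt_left (q := X ^ p.natDegree)
      (by rw [degree_X_pow, degree_eq_natDegree hp.ne_zero]) hp.ne_zero
      (by rw [hp.leadingCoeff, leadingCoeff_X_pow])
    rwa [degree_eq_natDegree hp.ne_zero] at this
  rw [eq_comm, ← sub_eq_zero, ← sum_sub_distrib,
    ← sum_eval_mul_eval_mul_eq_zero_of_degree_lt s x w hlow horth]
  exact sum_congr rfl fun n _ => by simp only [eval_sub, eval_pow, eval_X]; ring

theorem eval_eq_of_degree_lt_of_moments_eq [Field R] [LinearOrder R] [IsStrictOrderedRing R]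
    {f g : R[X]} {d : ℕ} (hw : ∀ n ∈ s, 0 < w n) (hf : f.degree < d) (hg : g.degree < d)
    (hfg : ∀ m < d, ∑ n ∈ s, f.eval (x n) * x n ^ m * w n
      = ∑ n ∈ s, g.eval (x n) * x n ^ m * w n) :
    ∀ n ∈ s, f.eval (x n) = g.eval (x n) := by
  have hmom : ∀ m < d, ∑ n ∈ s, (f - g).eval (x n) * x n ^ m * w n = 0 := fun m hm => by
    simp only [eval_sub, sub_mul, sum_sub_distrib, hfg m hm, sub_self]
  have hsq := sum_eval_mul_eval_mul_eq_zero_of_degree_lt s x w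
    ((degree_sub_le f g).trans_lt (max_lt hf hg)) hmom
  rw [sum_eq_zero_iff_of_nonneg fun n hn => mul_nonneg (mul_self_nonneg _) (hw n hn).le] at hsq
  intro n hn
  have := hsq n hn
  rw [mul_eq_zero, mul_self_eq_zero, eval_sub, sub_eq_zero] at this
  exact this.resolve_right (hw n hn).ne'

end Moments

theorem Lagrange.degree_interpolate_lt_of_sum_mul_pow_div_eq_zero {F ι : Type*} [Field F]
    [DecidableEq ι] {s : Finset ι} {v : ι → F} (hvs : Set.InjOn v s) (r : ι → F) {k : ℕ}
    (h : ∀ m < #s - k, ∑ i ∈ s, r i * v i ^ m / ∏ j ∈ s.erase i, (v i - v j) = 0) :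
    (interpolate s v r).degree < k := by
  set Q := interpolate s v r
  -- if `deg Q = d ≥ k`, the divided difference of `Q * X ^ (#s - 1 - d)` is `Q.leadingCoeff`
  by_contra! hkQ
  have hQ0 : Q ≠ 0 := by rintro hQ; simp [hQ] at hkQ
  have hkd : k ≤ Q.natDegree := by
    rwa [degree_eq_natDegree hQ0, Nat.cast_le] at hkQ
  have hds : Q.natDegree < #s :=
    (natDegree_lt_iff_degree_lt hQ0).mpr (degree_interpolate_lt r hvs)
  set m := #s - 1 - Q.natDegree
  have hsum := coeff_eq_sum hvs (P := Q * X ^ m) (by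
    rw [degree_mul_X_pow, degree_eq_natDegree hQ0]; norm_cast; omega)
  have hcoeff : (Q * X ^ m).coeff (#s - 1) = Q.leadingCoeff := by
    rw [show #s - 1 = Q.natDegree + m by omega, coeff_mul_X_pow]; rfl
  rw [hcoeff] at hsum
  refine leadingCoeff_ne_zero.mpr hQ0
    (hsum.trans ((sum_congr rfl fun i hi => ?_).trans (h m (by omega))))
  rw [eval_mul, eval_pow, eval_X, eval_interpolate_at_node r hvs hi]

section Nodes

variable {F ι : Type*} [Field F] [Fintype ι] [DecidableEq ι] {x : ι → F}
  (hx : Function.Injective x) (w : ι → F)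

include hx in
theorem exists_degree_lt_eval_eq_mul_prod_of_dual_orthogonal {wbar : ι → F}
    (hdual : ∀ n, w n * wbar n * ∏ m ∈ univ.erase n, (x n - x m) ^ 2 = 1) {f : F[X]} {k : ℕ}
    (horth : ∀ m < Fintype.card ι - k, ∑ n, f.eval (x n) * x n ^ m * wbar n = 0) :
    ∃ Q : F[X], Q.degree < k ∧
      ∀ n, f.eval (x n) = w n * (∏ m ∈ univ.erase n, (x n - x m)) * Q.eval (x n) := by
  have hwbar : ∀ n, wbar n = (w n * (∏ m ∈ univ.erase n, (x n - x m)) ^ 2)⁻¹ := fun n =>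
    eq_inv_of_mul_eq_one_left (by rw [← hdual n, prod_pow]; ring)
  have hwD : ∀ n, w n * ∏ m ∈ univ.erase n, (x n - x m) ≠ 0 := fun n h => by
    have := hdual n
    rw [prod_pow, show ∀ a b c : F, a * b * c ^ 2 = a * c * (b * c) by intros; ring, h,
      zero_mul] at this
    exact zero_ne_one this
  set r : ι → F := fun n => f.eval (x n) / (w n * ∏ m ∈ univ.erase n, (x n - x m))
  refine ⟨Lagrange.interpolate univ x r,
    Lagrange.degree_interpolate_lt_of_sum_mul_pow_div_eq_zero hx.injOn r fun m hm => ?_,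
    fun n => ?_⟩
  · rw [← horth m (by rwa [card_univ] at hm)]
    refine sum_congr rfl fun n _ => ?_
    rw [hwbar n]
    simp only [r]
    field_simp [hwD n]
  · rw [Lagrange.eval_interpolate_at_node r hx.injOn (mem_univ n), mul_div_cancel₀ _ (hwD n)]

include hx in
theorem sum_eval_mul_pow_mul_eq_coeff {f Q : F[X]}
    (hfQ : ∀ n, f.eval (x n) = w n * (∏ m ∈ univ.erase n, (x n - x m)) * Q.eval (x n))
    {m : ℕ} (hdeg : (f * X ^ m).degree < (Fintype.card ι : WithBot ℕ)) :
    ∑ n, Q.eval (x n) * x n ^ m * w n = (f * X ^ m).coeff (Fintype.card ι - 1) := by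
  rw [← card_univ, Lagrange.coeff_eq_sum hx.injOn (by rwa [card_univ])]
  refine sum_congr rfl fun n _ => ?_
  have hD : ∏ j ∈ univ.erase n, (x n - x j) ≠ 0 :=
    prod_ne_zero_iff.mpr fun j hj => sub_ne_zero.mpr (hx.ne (ne_of_mem_erase hj).symm)
  rw [eval_mul, eval_pow, eval_X, hfQ n]
  field_simp

end Nodes

theorem dual_polynomial_at_nodes_general
    (N k : ℕ) (hk1 : 1 ≤ k) (hk2 : k ≤ N - 1)
    (x : Fin N → ℝ) (hx : StrictMono x)
    (w wbar : Fin N → ℝ) (hw : ∀ n, 0 < w n)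
    (hdual : ∀ n, w n * wbar n * ∏ m ∈ Finset.univ.erase n, (x n - x m) ^ 2 = 1)
    (π : Polynomial ℝ) (hπm : π.Monic) (hπd : π.natDegree = k - 1)
    (γ : ℝ)
    (hnorm : ∑ n : Fin N, γ ^ 2 * (π.eval (x n)) ^ 2 * w n = 1)
    (horth : ∀ m : ℕ, m < k - 1 → ∑ n : Fin N, π.eval (x n) * (x n) ^ m * w n = 0)
    (πbar : Polynomial ℝ) (hπbm : πbar.Monic) (hπbd : πbar.natDegree = N - k)
    (horthbar : ∀ m : ℕ, m < N - k → ∑ n : Fin N, πbar.eval (x n) * (x n) ^ m * wbar n = 0) :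
    ∀ l : Fin N, πbar.eval (x l)
      = γ ^ 2 * w l * (∏ n ∈ Finset.univ.erase l, (x l - x n)) * π.eval (x l) := by
  obtain ⟨Q, hQdeg, hπbarQ⟩ :=
    exists_degree_lt_eval_eq_mul_prod_of_dual_orthogonal hx.injective w hdual (f := πbar)
      (by simpa using horthbar)
  have hπdeg : (γ ^ 2 • π).degree < k := by
    refine (degree_smul_le _ _).trans_lt ?_
    rw [degree_eq_natDegree hπm.ne_zero, hπd]
    exact_mod_cast Nat.sub_lt hk1 one_pos
  have hmonic : ∀ m, (πbar * X ^ m).Monic ∧ (πbar * X ^ m).natDegree = N - k + m := fun m =>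
    ⟨hπbm.mul (monic_X_pow m),
      by rw [hπbm.natDegree_mul (monic_X_pow m), hπbd, natDegree_X_pow]⟩
  have hmom : ∀ m < k, ∑ n, Q.eval (x n) * x n ^ m * w n
      = ∑ n, (γ ^ 2 • π).eval (x n) * x n ^ m * w n := by
    intro m hm
    have hsmul : ∑ n, (γ ^ 2 • π).eval (x n) * x n ^ m * w n
        = γ ^ 2 * ∑ n, π.eval (x n) * x n ^ m * w n := by
      rw [mul_sum]
      exact sum_congr rfl fun n _ => by rw [eval_smul, smul_eq_mul]; ring
    rw [sum_eval_mul_pow_mul_eq_coeff hx.injective w hπbarQ (by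
        rw [degree_eq_natDegree (hmonic m).1.ne_zero, (hmonic m).2, Fintype.card_fin]
        norm_cast; omega),
      Fintype.card_fin, hsmul]
    rcases Nat.lt_or_ge m (k - 1) with hlt | hge
    · rw [horth m hlt, mul_zero, coeff_eq_zero_of_natDegree_lt (by rw [(hmonic m).2]; omega)]
    · obtain rfl : m = k - 1 := by omega
      rw [show N - 1 = (πbar * X ^ (k - 1)).natDegree by rw [(hmonic _).2]; omega,
        (hmonic _).1.coeff_natDegree, ← hπd,
        hπm.sum_eval_mul_pow_natDegree_mul_eq _ _ _ (by rwa [hπd]), ← hnorm, mul_sum]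
      exact sum_congr rfl fun n _ => by ring
  intro l
  rw [hπbarQ l, eval_eq_of_degree_lt_of_moments_eq univ x w (fun n _ => hw n) hQdeg hπdeg hmom l
    (mem_univ l), eval_smul, smul_eq_mul]
  ring

/-- Borodin's identity relating a discrete orthogonal polynomial and its dual
at the nodes: `π̄_{N-k}(x_l) = γ_{k-1}² w_l ∏_{n≠l}(x_l - x_n) π_{k-1}(x_l)`. -/
theorem dual_polynomial_at_nodes
    (N k : ℕ) (hk1 : 1 ≤ k) (hk2 : k ≤ N - 1)
    (x : Fin N → ℝ) (hx : StrictMono x)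
    (w wbar : Fin N → ℝ) (hw : ∀ n, 0 < w n)
    (hdual : ∀ n, w n * wbar n * ∏ m ∈ Finset.univ.erase n, (x n - x m) ^ 2 = 1)
    (π : Polynomial ℝ) (hπm : π.Monic) (hπd : π.natDegree = k - 1)
    (γ : ℝ) (hγ : 0 < γ)
    (hnorm : ∑ n : Fin N, γ ^ 2 * (π.eval (x n)) ^ 2 * w n = 1)
    (horth : ∀ m : ℕ, m < k - 1 → ∑ n : Fin N, π.eval (x n) * (x n) ^ m * w n = 0)
    (πbar : Polynomial ℝ) (hπbm : πbar.Monic) (hπbd : πbar.natDegree = N - k)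
    (horthbar : ∀ m : ℕ, m < N - k → ∑ n : Fin N, πbar.eval (x n) * (x n) ^ m * wbar n = 0) :
    ∀ l : Fin N, πbar.eval (x l)
      = γ ^ 2 * w l * (∏ n ∈ Finset.univ.erase l, (x l - x n)) * π.eval (x l) :=
  dual_polynomial_at_nodes_general N k hk1 hk2 x hx w wbar hw hdual π hπm hπd γ hnorm horth πbar
    hπbm hπbd horthbar
end

section
/- With nodes x_0,...,x_{N-1}, positive weights w_n, dual weights w̄_n defined by w_n w̄_n ∏_{m≠n}(x_n-x_m)^2 = 1, let γ_k be the leading coefficient of the orthonormal polynomial of degree k for weights {w_n}, and γ̄_j the leading coefficient of the orthonormal polynomial of degree j for the dual weights. Then γ̄_{N-k-1} · γ_k = 1 for 0 ≤ k ≤ N-1. -/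
/-!
Write `r n = ∏_{m ≠ n} (x n - x m)`, so that `w n * w̄ n * r n = (r n)⁻¹`, and use Lagrange's
formula `∑ n, f (x n) / r n = coeff_{N-1} f` for `deg f < N`. Orthogonality of `p` says that the
values `p (x n) * w n * r n` are annihilated by `∑ n, · * x n ^ j / r n` for `j < k`. Applied to
their interpolating polynomial `g`, this kills the coefficients of `g` from the top down, one per
`j` (each time `deg (g * X ^ j) < N` again), so `deg g ≤ N - k - 1`, with top coefficient
`∑ n, p (x n) * x n ^ k * w n = 1 / γ`. Pairing `g` with `q` under `w̄` gives
`coeff_{N-1} (p * q) = γ γ̄` on one side and `(1 / γ) / γ̄` on the other, so `(γ γ̄)² = 1`.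
-/

open Polynomial Finset

namespace Lagrange

variable {F ι : Type*} [Field F] [DecidableEq ι] {s : Finset ι} {v : ι → F}

theorem coeff_card_sub_sub_one_eq_sum_mul_pow (hvs : Set.InjOn v s) {P : F[X]} {k : ℕ}
    (hk : k < #s) (hP : P.degree < ↑(#s - k)) :
    P.coeff (#s - k - 1) = ∑ i ∈ s, P.eval (v i) * v i ^ k / ∏ j ∈ s.erase i, (v i - v j) := by
  have hPX : (P * X ^ k).degree < ↑(#s) := by
    rw [degree_lt_iff_coeff_zero] at hP ⊢
    intro m hm
    rw [coeff_mul_X_pow']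
    split_ifs
    · exact hP _ (by omega)
    · rfl
  calc P.coeff (#s - k - 1) = (P * X ^ k).coeff (#s - 1) := by
        rw [coeff_mul_X_pow', if_pos (by omega)]
        congr 1
        omega
    _ = _ := by simp only [coeff_eq_sum hvs hPX, eval_mul, eval_pow, eval_X]

theorem degree_lt_of_sum_mul_pow_eq_zero (hvs : Set.InjOn v s) {P : F[X]}
    (hP : P.degree < #s) {k : ℕ} (hk : k ≤ #s)
    (h : ∀ j < k, ∑ i ∈ s, P.eval (v i) * v i ^ j / ∏ j ∈ s.erase i, (v i - v j) = 0) :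
    P.degree < ↑(#s - k) := by
  induction k with
  | zero => simpa using hP
  | succ k ih =>
    have hPk := ih (by omega) fun j hj => h j (by omega)
    have htop : P.coeff (#s - k - 1) = 0 := by
      rw [coeff_card_sub_sub_one_eq_sum_mul_pow hvs (by omega) hPk, h k (by omega)]
    rw [degree_lt_iff_coeff_zero] at hPk ⊢
    intro m hm
    rcases (show m = #s - k - 1 ∨ #s - k ≤ m by omega) with rfl | hm'
    · exact htop
    · exact hPk m hm'

theorem exists_eval_eq_mul_prod_of_sum_mul_pow_eq_zero (hvs : Set.InjOn v s) (u : ι → F)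
    {k : ℕ} (hk : k < #s) (hu : ∀ j < k, ∑ i ∈ s, u i * v i ^ j = 0) :
    ∃ g : F[X], g.natDegree ≤ #s - k - 1 ∧ g.coeff (#s - k - 1) = ∑ i ∈ s, u i * v i ^ k ∧
      ∀ i ∈ s, g.eval (v i) = u i * ∏ j ∈ s.erase i, (v i - v j) := by
  set g := interpolate s v fun i => u i * ∏ j ∈ s.erase i, (v i - v j)
  have hprod : ∀ i ∈ s, ∏ j ∈ s.erase i, (v i - v j) ≠ 0 := fun i hi =>
    prod_ne_zero_iff.2 fun j hj =>
      sub_ne_zero.2 fun h => (mem_erase.1 hj).1 (hvs (mem_erase.1 hj).2 hi h.symm)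
  have hgv : ∀ i ∈ s, g.eval (v i) = u i * ∏ j ∈ s.erase i, (v i - v j) :=
    fun i hi => eval_interpolate_at_node _ hvs hi
  have hsum : ∀ j, ∑ i ∈ s, g.eval (v i) * v i ^ j / ∏ j ∈ s.erase i, (v i - v j)
      = ∑ i ∈ s, u i * v i ^ j := fun j =>
    sum_congr rfl fun i hi => by rw [hgv i hi]; field_simp [hprod i hi]
  have hg : g.degree < ↑(#s - k) := degree_lt_of_sum_mul_pow_eq_zero hvs
    (degree_interpolate_lt _ hvs) hk.le fun j hj => by rw [hsum, hu j hj]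
  refine ⟨g, natDegree_le_iff_coeff_eq_zero.2 fun m hm => ?_, ?_, hgv⟩
  · exact (degree_lt_iff_coeff_zero _ _).1 hg m (by omega)
  · rw [coeff_card_sub_sub_one_eq_sum_mul_pow hvs hk hg, hsum]

theorem leadingCoeff_mul_leadingCoeff_eq_sum (hvs : Set.InjOn v s) {p q : F[X]} (hp : p ≠ 0)
    (hq : q ≠ 0) (hpq : p.natDegree + q.natDegree + 1 = #s) :
    p.leadingCoeff * q.leadingCoeff
      = ∑ i ∈ s, p.eval (v i) * q.eval (v i) / ∏ j ∈ s.erase i, (v i - v j) := by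
  have hdeg : (p * q).natDegree = #s - 1 := by rw [natDegree_mul hp hq]; omega
  have hlt : (p * q).degree < ↑(#s) :=
    degree_le_natDegree.trans_lt (by rw [hdeg]; exact_mod_cast (by omega))
  rw [← leadingCoeff_mul, leadingCoeff, hdeg, coeff_eq_sum hvs hlt]
  simp only [eval_mul]

end Lagrange

section Orthogonality

variable {F ι : Type*} [Field F] (s : Finset ι) (v w : ι → F) {Q : F[X]} {d : ℕ}

theorem sum_eval_mul_eval_mul_eq_zero_of_degree_lt_s7
    (hQ : ∀ m < d, ∑ i ∈ s, Q.eval (v i) * v i ^ m * w i = 0) {P : F[X]} (hP : P.degree < d) :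
    ∑ i ∈ s, Q.eval (v i) * P.eval (v i) * w i = 0 := by
  rcases eq_or_ne P 0 with rfl | hP0
  · simp
  have hPd : P.natDegree < d := (natDegree_lt_iff_degree_lt hP0).2 hP
  calc ∑ i ∈ s, Q.eval (v i) * P.eval (v i) * w i
      = ∑ m ∈ range d, P.coeff m * ∑ i ∈ s, Q.eval (v i) * v i ^ m * w i := by
        simp_rw [eval_eq_sum_range' hPd, mul_sum, sum_mul]
        rw [sum_comm]
        exact sum_congr rfl fun m _ => sum_congr rfl fun i _ => by ring
    _ = 0 := sum_eq_zero fun m hm => by rw [hQ m (mem_range.1 hm), mul_zero]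

theorem sum_eval_mul_eval_mul_eq_coeff_div_leadingCoeff (hQ0 : Q ≠ 0) (hQd : Q.natDegree = d)
    (hQ : ∀ m < d, ∑ i ∈ s, Q.eval (v i) * v i ^ m * w i = 0) {P : F[X]} (hP : P.natDegree ≤ d) :
    ∑ i ∈ s, Q.eval (v i) * P.eval (v i) * w i
      = P.coeff d / Q.leadingCoeff * ∑ i ∈ s, Q.eval (v i) ^ 2 * w i := by
  set c := P.coeff d / Q.leadingCoeff
  have hlow : (P - C c * Q).degree < d := by
    rw [degree_lt_iff_coeff_zero]
    intro m hm
    rw [coeff_sub, coeff_C_mul]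
    rcases hm.lt_or_eq with hm | rfl
    · rw [coeff_eq_zero_of_natDegree_lt (by omega), coeff_eq_zero_of_natDegree_lt (by omega)]
      ring
    · rw [← hQd, coeff_natDegree, hQd, div_mul_cancel₀ _ (leadingCoeff_ne_zero.2 hQ0), sub_self]
  have horth := sum_eval_mul_eval_mul_eq_zero_of_degree_lt_s7 s v w hQ hlow
  simp only [eval_sub, eval_mul, eval_C, mul_sub, sub_mul, sum_sub_distrib] at horth
  rw [sub_eq_zero.1 horth, mul_sum]
  exact sum_congr rfl fun i _ => by ring

end Orthogonality

theorem dual_leading_coefficients_reciprocity_general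
    (N k : ℕ) (hN : 0 < N) (hk : k ≤ N - 1)
    (x : Fin N → ℝ) (hx : StrictMono x)
    (w wbar : Fin N → ℝ)
    (hdual : ∀ n, w n * wbar n * ∏ m ∈ Finset.univ.erase n, (x n - x m) ^ 2 = 1)
    (p : Polynomial ℝ) (hpd : p.natDegree = k)
    (γ : ℝ) (hplc : p.leadingCoeff = γ) (hγ : 0 < γ)
    (hpn : ∑ n : Fin N, (p.eval (x n)) ^ 2 * w n = 1)
    (hpo : ∀ m : ℕ, m < k → ∑ n : Fin N, p.eval (x n) * (x n) ^ m * w n = 0)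
    (q : Polynomial ℝ) (hqd : q.natDegree = N - k - 1)
    (γbar : ℝ) (hqlc : q.leadingCoeff = γbar) (hγbar : 0 < γbar)
    (hqn : ∑ n : Fin N, (q.eval (x n)) ^ 2 * wbar n = 1)
    (hqo : ∀ m : ℕ, m < N - k - 1 → ∑ n : Fin N, q.eval (x n) * (x n) ^ m * wbar n = 0) :
    γbar * γ = 1 := by
  have hvs : Set.InjOn x (univ : Finset (Fin N)) := hx.injective.injOn
  have hcard : #(univ : Finset (Fin N)) = N := card_fin N
  have hwr : ∀ n, w n * wbar n * ∏ m ∈ univ.erase n, (x n - x m)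
      = (∏ m ∈ univ.erase n, (x n - x m))⁻¹ := fun n =>
    eq_inv_of_mul_eq_one_left (by rw [mul_assoc, ← sq, ← prod_pow]; exact hdual n)
  have hp0 : p ≠ 0 := leadingCoeff_ne_zero.1 (hplc ▸ hγ.ne')
  have hq0 : q ≠ 0 := leadingCoeff_ne_zero.1 (hqlc ▸ hγbar.ne')
  obtain ⟨g, hgd, hgc, hgv⟩ := Lagrange.exists_eval_eq_mul_prod_of_sum_mul_pow_eq_zero hvs
    (fun n => p.eval (x n) * w n) (k := k) (by omega)
    fun j hj => by simpa only [mul_right_comm] using hpo j hj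
  rw [hcard] at hgd hgc
  have hpk : ∑ n, p.eval (x n) * w n * x n ^ k = γ⁻¹ := by
    simpa [hplc, hpn, mul_right_comm] using
      sum_eval_mul_eval_mul_eq_coeff_div_leadingCoeff univ x w hp0 hpd hpo (P := X ^ k) (by simp)
  have hgq : ∑ n, q.eval (x n) * g.eval (x n) * wbar n = γbar * γ := by
    rw [mul_comm, ← hplc, ← hqlc,
      Lagrange.leadingCoeff_mul_leadingCoeff_eq_sum hvs hp0 hq0 (by rw [hpd, hqd, hcard]; omega)]
    refine sum_congr rfl fun n _ => ?_
    rw [hgv n (mem_univ n), div_eq_mul_inv, ← hwr n]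
    ring
  have hqg := sum_eval_mul_eval_mul_eq_coeff_div_leadingCoeff univ x wbar hq0 hqd hqo hgd
  rw [hgq, hgc, hpk, hqlc, hqn, mul_one] at hqg
  have hsq : (γbar * γ) ^ 2 = 1 := by
    field_simp at hqg
    linear_combination hqg
  exact (pow_eq_one_iff_of_nonneg (by positivity) two_ne_zero).1 hsq

/-- Reciprocity of leading coefficients of dual families of discrete
orthogonal polynomials: `γ̄_{N-k-1} · γ_k = 1`. -/
theorem dual_leading_coefficients_reciprocity
    (N k : ℕ) (hN : 0 < N) (hk : k ≤ N - 1)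
    (x : Fin N → ℝ) (hx : StrictMono x)
    (w wbar : Fin N → ℝ) (hw : ∀ n, 0 < w n)
    (hdual : ∀ n, w n * wbar n * ∏ m ∈ Finset.univ.erase n, (x n - x m) ^ 2 = 1)
    (p : Polynomial ℝ) (hpd : p.natDegree = k)
    (γ : ℝ) (hplc : p.leadingCoeff = γ) (hγ : 0 < γ)
    (hpn : ∑ n : Fin N, (p.eval (x n)) ^ 2 * w n = 1)
    (hpo : ∀ m : ℕ, m < k → ∑ n : Fin N, p.eval (x n) * (x n) ^ m * w n = 0)
    (q : Polynomial ℝ) (hqd : q.natDegree = N - k - 1)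
    (γbar : ℝ) (hqlc : q.leadingCoeff = γbar) (hγbar : 0 < γbar)
    (hqn : ∑ n : Fin N, (q.eval (x n)) ^ 2 * wbar n = 1)
    (hqo : ∀ m : ℕ, m < N - k - 1 → ∑ n : Fin N, q.eval (x n) * (x n) ^ m * wbar n = 0) :
    γbar * γ = 1 :=
  dual_leading_coefficients_reciprocity_general N k hN hk x hx w wbar hdual p hpd γ hplc hγ hpn hpo
    q hqd γbar hqlc hγbar hqn hqo
end

section
/- Let A, B > 0 and 0 < c < 1. Define D = c(1−c)(A+c)(B+c)(A+B+c)(A+B+c+1) and let α, β be the two roots of X² − 2·[A(A+B)+(A+B)(B−A+2)c+(B−A+2)c²]/(A+B+2c)² · X + ([c²+(A+B)c−A]/(A+B+2c)²)² = 0, namely α = [(B−A+2)c²+(A+B)(B−A+2)c+A(A+B) − 2√D]/(A+B+2c)² and β = [(B−A+2)c²+(A+B)(B−A+2)c+A(A+B) + 2√D]/(A+B+2c)². Then D > 0 and 0 ≤ α < β ≤ 1. -/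
/-- The discriminant `D` for the Hahn band endpoints is positive, and the two
roots `α`, `β` of the endpoint quadratic satisfy `0 ≤ α < β ≤ 1`. -/
theorem hahn_band_endpoints (A B c : ℝ) (hA : 0 < A) (hB : 0 < B)
    (hc0 : 0 < c) (hc1 : c < 1) :
    let D := c * (1 - c) * (A + c) * (B + c) * (A + B + c) * (A + B + c + 1)
    let α := ((B - A + 2) * c ^ 2 + (A + B) * (B - A + 2) * c + A * (A + B)
        - 2 * Real.sqrt D) / (A + B + 2 * c) ^ 2
    let β := ((B - A + 2) * c ^ 2 + (A + B) * (B - A + 2) * c + A * (A + B)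
        + 2 * Real.sqrt D) / (A + B + 2 * c) ^ 2
    0 < D ∧ 0 ≤ α ∧ α < β ∧ β ≤ 1 := by
  intro D α β
  have h1c : (0:ℝ) < 1 - c := by linarith
  have hD : 0 < D :=
    mul_pos (mul_pos (mul_pos (mul_pos (mul_pos hc0 h1c) (by linarith))
      (by linarith)) (by linarith)) (by linarith)
  have hS : (0:ℝ) < (A + B + 2 * c) ^ 2 := by positivity
  -- AM-GM decomposition for α ≥ 0
  have hp : (0:ℝ) ≤ c * ((B + c) * (A + B + c + 1)) := by positivity
  have hq : (0:ℝ) ≤ (1 - c) * ((A + c) * (A + B + c)) := by positivity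
  have hsD1 : Real.sqrt D
      = Real.sqrt (c * ((B + c) * (A + B + c + 1)))
        * Real.sqrt ((1 - c) * ((A + c) * (A + B + c))) := by
    rw [← Real.sqrt_mul hp]
    congr 1
    show D = _
    ring
  have key1 : 2 * Real.sqrt D ≤ (B - A + 2) * c ^ 2 + (A + B) * (B - A + 2) * c
      + A * (A + B) := by
    nlinarith [Real.sq_sqrt hp, Real.sq_sqrt hq,
      sq_nonneg (Real.sqrt (c * ((B + c) * (A + B + c + 1)))
        - Real.sqrt ((1 - c) * ((A + c) * (A + B + c)))), hsD1]
  -- AM-GM decomposition for β ≤ 1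
  have hp' : (0:ℝ) ≤ c * ((A + c) * (A + B + c + 1)) := by positivity
  have hq' : (0:ℝ) ≤ (1 - c) * ((B + c) * (A + B + c)) := by positivity
  have hsD2 : Real.sqrt D
      = Real.sqrt (c * ((A + c) * (A + B + c + 1)))
        * Real.sqrt ((1 - c) * ((B + c) * (A + B + c))) := by
    rw [← Real.sqrt_mul hp']
    congr 1
    show D = _
    ring
  have key2 : 2 * Real.sqrt D ≤ (A + B + 2 * c) ^ 2
      - ((B - A + 2) * c ^ 2 + (A + B) * (B - A + 2) * c + A * (A + B)) := by
    nlinarith [Real.sq_sqrt hp', Real.sq_sqrt hq',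
      sq_nonneg (Real.sqrt (c * ((A + c) * (A + B + c + 1)))
        - Real.sqrt ((1 - c) * ((B + c) * (A + B + c)))), hsD2]
  have hsDpos : 0 < Real.sqrt D := Real.sqrt_pos.mpr hD
  refine ⟨hD, ?_, ?_, ?_⟩
  · apply div_nonneg _ hS.le
    linarith
  · show _ / _ < _ / _
    gcongr
    linarith
  · show _ / _ ≤ 1
    rw [div_le_one hS]
    linarith
end
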